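/- arXiv:1603.09744 — 2 statements merged into one kernel-verified Lean document; each statement's English description precedes it below -/
import Mathlib

section
/- Let a be a weak composition of length n with at least one nonzero entry and let k be the largest index with a_k ≠ 0. Then the monomial slide polynomial 𝔐_a is quasisymmetric in the variables x_1,…,x_k if and only if a is quasi-flat. Moreover, when a is quasi-flat, 𝔐_a = M_{flat(a)}(x_1,…,x_k). -/
/-!
A weak composition `b` with `flat b = α` is `spread q α` for a unique strictly increasing
position vector `q`, and for two such vectors dominance `spread q α ≥ spread p α` is just
`q ≤ p` pointwise. So if `p` is the position vector of `a`, the coefficient of `x^(spread q α)`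
in `𝔐_a` is `[q ≤ p]`, while in `M_α(x_1, …, x_k)` it is `[q < k]`. As `p` ends at position `k`,
these agree for all `q` exactly when `p` is the top-justified vector `t ↦ k - ℓ(α) + t`, that
is, when `a` is quasi-flat. Otherwise the coefficients at `p` (one) and at the top-justified
vector (zero) break quasisymmetry.
-/

open scoped Classical

namespace SlidePaper

/-- Sum of the first `i` entries of a weak composition of length `n`. -/
def psum {n : ℕ} (a : Fin n → ℕ) (i : ℕ) : ℕ :=
  ∑ j ∈ Finset.univ.filter (fun j : Fin n => (j : ℕ) < i), a j

/-- `b` dominates `a`: all partial sums of `b` are at least those of `a`. -/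
def Dominates {n : ℕ} (b a : Fin n → ℕ) : Prop :=
  ∀ i : Fin (n + 1), psum a i ≤ psum b i

/-- The flattening of a weak composition: the list of its nonzero entries in order. -/
def flat {n : ℕ} (a : Fin n → ℕ) : List ℕ :=
  (List.ofFn a).filter (fun x => x ≠ 0)

/-- `β` refines `α`: `β` splits into consecutive blocks with sums `α₁, α₂, …`. -/
def Refines (β α : List ℕ) : Prop :=
  ∃ L : List (List ℕ), L.flatten = β ∧ L.map List.sum = α

/-- All weak compositions of length `n` with entries at most `k`. -/
def wcFinset (n k : ℕ) : Finset (Fin n → ℕ) :=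
  Fintype.piFinset fun _ => Finset.range (k + 1)

/-- The monomial slide polynomial `𝔐_a`. -/
noncomputable def slideM {n : ℕ} (a : Fin n → ℕ) : MvPolynomial (Fin n) ℤ :=
  ∑ b ∈ (wcFinset n (∑ i, a i)).filter (fun b => Dominates b a ∧ flat b = flat a),
    MvPolynomial.monomial (Finsupp.equivFunOnFinite.symm b) 1

/-- The fundamental slide polynomial `𝔉_a`. -/
noncomputable def slideF {n : ℕ} (a : Fin n → ℕ) : MvPolynomial (Fin n) ℤ :=
  ∑ b ∈ (wcFinset n (∑ i, a i)).filter (fun b => Dominates b a ∧ Refines (flat b) (flat a)),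
    MvPolynomial.monomial (Finsupp.equivFunOnFinite.symm b) 1

/-- A weak composition is quasi-flat if its nonzero entries occupy consecutive positions. -/
def QuasiFlat {n : ℕ} (a : Fin n → ℕ) : Prop :=
  ∀ i j l : Fin n, i ≤ j → j ≤ l → a i ≠ 0 → a l ≠ 0 → a j ≠ 0

/-- `b` strongly dominates `a`. -/
def StronglyDominates {n : ℕ} (b a : Fin n → ℕ) : Prop :=
  Dominates b a ∧ ∀ c : Fin n → ℕ, Dominates c a → flat c = flat b → Dominates c b

/-- The exponent vector placing the parts of `α` at the positions `i`. -/
noncomputable def placeExp {n : ℕ} (α : List ℕ) (i : Fin α.length → Fin n) : Fin n →₀ ℕ :=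
  ∑ t : Fin α.length, Finsupp.single (i t) (α.get t)

/-- `f` is quasisymmetric in the variables `x_1, …, x_k` (0-indexed: `x_0, …, x_{k-1}`). -/
def IsQuasisymmetricIn {n : ℕ} (k : ℕ) (f : MvPolynomial (Fin n) ℤ) : Prop :=
  ∀ α : List ℕ, (∀ x ∈ α, 0 < x) →
    ∀ i j : Fin α.length → Fin n, StrictMono i → StrictMono j →
      (∀ t, (i t : ℕ) < k) → (∀ t, (j t : ℕ) < k) →
      MvPolynomial.coeff (placeExp α i) f = MvPolynomial.coeff (placeExp α j) f

/-- The monomial quasisymmetric polynomial `M_α(x_1, …, x_k)` inside `ℤ[x_1, …, x_n]`. -/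
noncomputable def Mqs (n k : ℕ) (α : List ℕ) : MvPolynomial (Fin n) ℤ :=
  ∑ i ∈ (Finset.univ : Finset (Fin α.length → Fin n)).filter
      (fun i : Fin α.length → Fin n => StrictMono i ∧ ∀ t, (i t : ℕ) < k),
    ∏ t : Fin α.length, (MvPolynomial.X (i t) : MvPolynomial (Fin n) ℤ) ^ α.get t

/-- The fundamental quasisymmetric polynomial `F_α(x_1, …, x_k)` inside `ℤ[x_1, …, x_n]`. -/
noncomputable def Fqs (n k : ℕ) (α : List ℕ) : MvPolynomial (Fin n) ℤ :=
  ∑ c ∈ (Finset.univ : Finset (Composition α.sum)).filter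
      (fun c => Refines c.blocks α ∧ c.blocks.length ≤ k),
    Mqs n k c.blocks

/-- Place the weak composition `a` (of length `N`) at offset `k` inside length `M`. -/
def shiftComp {N : ℕ} (k M : ℕ) (a : Fin N → ℕ) : Fin M → ℕ :=
  fun i => if h : k ≤ (i : ℕ) ∧ (i : ℕ) - k < N then a ⟨(i : ℕ) - k, h.2⟩ else 0

/-- Spread the values `g` to positions `ι` inside a weak composition of length `n`. -/
def spread {l n : ℕ} (ι : Fin l → Fin n) (g : Fin l → ℕ) : Fin n → ℕ :=
  fun i => ∑ k, if ι k = i then g k else 0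

/-- The monomial quasisymmetric function `M_α` in infinitely many variables. -/
noncomputable def MqsFun (α : List ℕ) : MvPowerSeries ℕ ℤ :=
  fun d => if ∃ i : Fin α.length → ℕ, StrictMono i ∧
      d = ∑ t : Fin α.length, Finsupp.single (i t) (α.get t) then 1 else 0

/-- The fundamental quasisymmetric function `F_α` in infinitely many variables. -/
noncomputable def FqsFun (α : List ℕ) : MvPowerSeries ℕ ℤ :=
  ∑ c ∈ (Finset.univ : Finset (Composition α.sum)).filter (fun c => Refines c.blocks α),
    MqsFun c.blocks

/-- The cells of the Young diagram of `lam` (French notation): row `r` (from the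
bottom, 0-indexed) has `lam.get r` cells. -/
abbrev Cells (lam : List ℕ) := Σ r : Fin lam.length, Fin (lam.get r)

/-- A filling of `lam` with entries in `{1, …, n}` (encoded as `Fin n`) is a semistandard
Young tableau: rows weakly increase left to right, columns strictly increase bottom to top. -/
def IsSSYT {n : ℕ} {lam : List ℕ} (T : Cells lam → Fin n) : Prop :=
  (∀ (r : Fin lam.length) (c c' : Fin (lam.get r)), c ≤ c' → T ⟨r, c⟩ ≤ T ⟨r, c'⟩) ∧
  (∀ (r r' : Fin lam.length) (c' : Fin (lam.get r')) (h : (c' : ℕ) < lam.get r),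
      (r : ℕ) < (r' : ℕ) → T ⟨r, ⟨c', h⟩⟩ < T ⟨r', c'⟩)

/-- The weight of a filling: the `v`-th entry counts the occurrences of the value `v`. -/
def wtT {n : ℕ} {lam : List ℕ} (T : Cells lam → Fin n) : Fin n → ℕ :=
  fun v => (Finset.univ.filter (fun x : Cells lam => T x = v)).card

/-- A filling is quasi-Yamanouchi if for every value `v > 1`, the leftmost occurrence of `v`
lies weakly left of some occurrence of `v - 1`. -/
def IsQY {n : ℕ} {lam : List ℕ} (T : Cells lam → Fin n) : Prop :=
  ∀ (v : Fin n) (x : Cells lam), T x = v → 0 < (v : ℕ) →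
    (∀ y : Cells lam, T y = v → (x.2 : ℕ) ≤ (y.2 : ℕ)) →
    ∃ z : Cells lam, (T z : ℕ) + 1 = (v : ℕ) ∧ (x.2 : ℕ) ≤ (z.2 : ℕ)

/-- The Schur polynomial `s_lam(x_1, …, x_n)` as the generating function of
semistandard Young tableaux. -/
noncomputable def schurPoly (n : ℕ) (lam : List ℕ) : MvPolynomial (Fin n) ℤ :=
  ∑ T ∈ (Finset.univ : Finset (Cells lam → Fin n)).filter (fun T => IsSSYT T),
    MvPolynomial.monomial (Finsupp.equivFunOnFinite.symm (wtT T)) 1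

/-- One destandardization step on fillings: for some value `v` occurring in `T` whose
leftmost occurrence is strictly right of every occurrence of `v - 1`, every `v` is
decremented to `v - 1`. -/
def TabStep {n : ℕ} {lam : List ℕ} (T T' : Cells lam → Fin n) : Prop :=
  ∃ v : Fin n, 0 < (v : ℕ) ∧ (∃ x, T x = v) ∧
    (∀ x y : Cells lam, T x = v → (T y : ℕ) + 1 = (v : ℕ) → (y.2 : ℕ) < (x.2 : ℕ)) ∧
    ∀ x : Cells lam, (T' x : ℕ) = if T x = v then (v : ℕ) - 1 else (T x : ℕ)

/-- The reading word of a set of crosses: rows are read from top to bottom, each row from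
left to right, the cross in (0-indexed) row `i` and column `j` recording the letter `i + j`
(representing the simple transposition swapping `i + j` and `i + j + 1` of `{0, 1, 2, …}`). -/
def readWord (P : Finset (ℕ × ℕ)) : List ℕ :=
  ((List.range (P.sup Prod.fst + 1)).reverse).flatMap
    (fun i => ((List.range (P.sup Prod.snd + 1)).filter (fun j => decide ((i, j) ∈ P))).map
      (fun j => i + j))

/-- The permutation `s_{i_ℓ} ⋯ s_{i_1}` associated to the word `(i_1, …, i_ℓ)`,
where `s_k` swaps `k` and `k + 1`. -/
def wordPerm (l : List ℕ) : Equiv.Perm ℕ :=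
  ((l.map (fun k => Equiv.swap k (k + 1))).reverse).prod

/-- A word is reduced if no shorter word has the same product. -/
def IsReducedWord (l : List ℕ) : Prop :=
  ∀ l' : List ℕ, wordPerm l' = wordPerm l → l.length ≤ l'.length

/-- `P` is a reduced pipe dream of shape `w`: the pipes trace out `w` and no two pipes
cross more than once, equivalently the reading word of `P` is a reduced word for `w`. -/
def IsPD (w : Equiv.Perm ℕ) (P : Finset (ℕ × ℕ)) : Prop :=
  wordPerm (readWord P) = w ∧ IsReducedWord (readWord P)

/-- `P` is a quasi-Yamanouchi pipe dream of shape `w`: for every row, the westernmost cross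
is in the first column or lies weakly west of some cross in the row above. -/
def IsQPD (w : Equiv.Perm ℕ) (P : Finset (ℕ × ℕ)) : Prop :=
  IsPD w P ∧ ∀ i j : ℕ, (i, j) ∈ P → (∀ j', (i, j') ∈ P → j ≤ j') →
    (j = 0 ∨ ∃ j', (i + 1, j') ∈ P ∧ j ≤ j')

/-- One destandardization step on pipe dreams: a row with no cross in the first column,
all of whose crosses lie strictly east of every cross in the row above, has all its
crosses moved one step northwest. -/
def PDStep (P P' : Finset (ℕ × ℕ)) : Prop :=
  ∃ r : ℕ, (∃ j, (r, j) ∈ P) ∧ (r, 0) ∉ P ∧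
    (∀ j j', (r, j) ∈ P → (r + 1, j') ∈ P → j' < j) ∧
    P' = P.filter (fun p => p.1 ≠ r) ∪
      (P.filter (fun p => p.1 = r)).image (fun p => (r + 1, p.2 - 1))

/-- The number of crosses of `P` in (0-indexed) row `i`. -/
def rowWt (P : Finset (ℕ × ℕ)) (i : ℕ) : ℕ := (P.filter (fun p => p.1 = i)).card

/-- The weight of a pipe dream, as a weak composition of length `n`. -/
def wtFin (n : ℕ) (P : Finset (ℕ × ℕ)) : Fin n → ℕ := fun i => rowWt P (i : ℕ)

/-- The flattened weight of a pipe dream: the list of nonzero row counts, bottom row first. -/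
def flatWt (P : Finset (ℕ × ℕ)) : List ℕ :=
  ((List.range (P.sup Prod.fst + 1)).map (rowWt P)).filter (fun x => x ≠ 0)

/-- The Schubert polynomial of `w` in the variables `x_1, …, x_n`, as the generating
function of reduced pipe dreams of shape `w`. -/
noncomputable def SchubertPoly (n : ℕ) (w : Equiv.Perm ℕ) : MvPolynomial (Fin n) ℤ :=
  ∑ᶠ P ∈ {P : Finset (ℕ × ℕ) | IsPD w P},
    MvPolynomial.monomial (Finsupp.equivFunOnFinite.symm (wtFin n P)) 1

/-- The Lehmer code of `w` (0-indexed): `lehmer w i` counts `j > i` with `w j < w i`. -/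
noncomputable def lehmer (w : Equiv.Perm ℕ) (i : ℕ) : ℕ :=
  Set.ncard {j : ℕ | i < j ∧ w j < w i}

/-- The Lehmer code of `w` as a weak composition of length `n`. -/
noncomputable def lehmerFin (n : ℕ) (w : Equiv.Perm ℕ) : Fin n → ℕ :=
  fun i => lehmer w (i : ℕ)

/-- The number of inversions of `w`. -/
noncomputable def invCount (w : Equiv.Perm ℕ) : ℕ :=
  Set.ncard {p : ℕ × ℕ | p.1 < p.2 ∧ w p.2 < w p.1}

/-- The largest entry of the Lehmer code of `w`. -/
noncomputable def maxLehmer (w : Equiv.Perm ℕ) : ℕ :=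
  sSup (Set.range (lehmer w))

/-- The (0-indexed) position of the first descent of `w`. -/
noncomputable def firstDescent (w : Equiv.Perm ℕ) : ℕ :=
  sInf {i : ℕ | w (i + 1) < w i}

/-- `δ(w) = 1` if every position attaining `max(L(w))` is at or before the first descent,
and `δ(w) = 0` otherwise. -/
noncomputable def delta (w : Equiv.Perm ℕ) : ℤ :=
  if ∀ i : ℕ, lehmer w i = maxLehmer w → i ≤ firstDescent w then 1 else 0

/-- `η(w) = inv(w) − max(L(w)) + δ(w) − min{i : w_i > w_{i+1}}`. -/
noncomputable def eta (w : Equiv.Perm ℕ) : ℤ :=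
  (invCount w : ℤ) - (maxLehmer w : ℤ) + delta w - ((firstDescent w : ℤ) + 1)

/-- The decomposition of a list into maximal strictly increasing runs. -/
def runsStrict : List ℕ → List (List ℕ)
  | [] => []
  | x :: rest =>
    match runsStrict rest, rest with
    | r :: rs, y :: _ => if x < y then (x :: r) :: rs else [x] :: r :: rs
    | _, _ => [[x]]

/-- The descent composition of a word: lengths of its maximal increasing runs, a new run
beginning whenever a letter is followed by a weakly smaller letter. -/
def desStrict (l : List ℕ) : List ℕ := (runsStrict l).map List.length

/-- The decomposition of a list into maximal weakly increasing runs. -/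
def runsWeak : List ℕ → List (List ℕ)
  | [] => []
  | x :: rest =>
    match runsWeak rest, rest with
    | r :: rs, y :: _ => if x ≤ y then (x :: r) :: rs else [x] :: r :: rs
    | _, _ => [[x]]

/-- The descent composition of a word: the lengths of its maximal weakly increasing runs. -/
def desComp (l : List ℕ) : List ℕ := (runsWeak l).map List.length

/-- The permutation `1^m × w`, fixing `0, …, m-1` and acting by `w` shifted by `m` above. -/
def shiftPerm (m : ℕ) (w : Equiv.Perm ℕ) : Equiv.Perm ℕ where
  toFun i := if i < m then i else w (i - m) + m
  invFun i := if i < m then i else w.symm (i - m) + m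
  left_inv i := by
    dsimp only
    by_cases h : i < m
    · simp [h]
    · have h2 : ¬ (w (i - m) + m < m) := by omega
      rw [if_neg h, if_neg h2, Nat.add_sub_cancel, Equiv.symm_apply_apply]
      omega
  right_inv i := by
    dsimp only
    by_cases h : i < m
    · simp [h]
    · have h2 : ¬ (w.symm (i - m) + m < m) := by omega
      rw [if_neg h, if_neg h2, Nat.add_sub_cancel, Equiv.apply_symm_apply]
      omega

/-- The quasi-shuffle product of two (strong) compositions, as a multiset of compositions. -/
def qShuffle : List ℕ → List ℕ → Multiset (List ℕ)
  | [], β => {β}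
  | α, [] => {α}
  | a :: α, b :: β =>
      ((qShuffle α (b :: β)).map (a :: ·)) + ((qShuffle (a :: α) β).map (b :: ·)) +
        ((qShuffle α β).map ((a + b) :: ·))
termination_by α β => α.length + β.length
decreasing_by all_goals (simp only [List.length_cons]; omega)

def shuffles : List ℕ → List ℕ → Multiset (List ℕ)
  | [], B => {B}
  | A, [] => {A}
  | x :: A, y :: B =>
      ((shuffles A (y :: B)).map (x :: ·)) + ((shuffles (x :: A) B).map (y :: ·))
termination_by A B => A.length + B.length
decreasing_by all_goals (simp only [List.length_cons]; omega)

/-- The word `(2n-1)^{a_1} (2n-3)^{a_2} ⋯ 1^{a_n}` associated to a weak composition `a`. -/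
def wordA {n : ℕ} (a : Fin n → ℕ) : List ℕ :=
  (List.ofFn (fun i : Fin n => List.replicate (a i) (2 * n - 2 * (i : ℕ) - 1))).flatten

/-- The word `(2n)^{b_1} (2n-2)^{b_2} ⋯ 2^{b_n}` associated to a weak composition `b`. -/
def wordB {n : ℕ} (b : Fin n → ℕ) : List ℕ :=
  (List.ofFn (fun i : Fin n => List.replicate (b i) (2 * n - 2 * (i : ℕ)))).flatten

/-- A list (padded with trailing zeros) dominates a weak composition of length `n`. -/
def DominatesList {n : ℕ} (l : List ℕ) (a : Fin n → ℕ) : Prop :=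
  ∀ i : Fin (n + 1), psum a (i : ℕ) ≤ ((l.take (i : ℕ)).sum)

/-- The number of letters of the `A`-word (the odd letters) in the `k`-th weakly
increasing run of `C`. -/
def runCountA (C : List ℕ) (k : Fin (runsWeak C).length) : ℕ :=
  (((runsWeak C).get k).filter (fun z => z % 2 = 1)).length

/-- The number of letters of the `B`-word (the even letters) in the `k`-th weakly
increasing run of `C`. -/
def runCountB (C : List ℕ) (k : Fin (runsWeak C).length) : ℕ :=
  (((runsWeak C).get k).filter (fun z => z % 2 = 0)).length

/-- The length of the `k`-th weakly increasing run of `C`. -/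
def runLen (C : List ℕ) (k : Fin (runsWeak C).length) : ℕ :=
  ((runsWeak C).get k).length

/-- `c = bump_{(a,b)}(C)`: the unique weak composition of length `n` obtained by inserting
zero parts into `Des(C)` so that the correspondingly placed `Des_A` and `Des_B` dominate
`a` and `b`, minimal in dominance order among all such insertions. -/
def IsBumpS {n : ℕ} (a b : Fin n → ℕ) (C : List ℕ) (c : Fin n → ℕ) : Prop :=
  ∃ ι : Fin (runsWeak C).length → Fin n, StrictMono ι ∧
    c = spread ι (runLen C) ∧
    Dominates (spread ι (runCountA C)) a ∧ Dominates (spread ι (runCountB C)) b ∧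
    ∀ ι' : Fin (runsWeak C).length → Fin n, StrictMono ι' →
      Dominates (spread ι' (runCountA C)) a → Dominates (spread ι' (runCountB C)) b →
      Dominates (spread ι' (runLen C)) c

/-- The multiplicity `[c ∣ a ⧢ b]` of `c` in the slide product of `a` and `b`: the number of
shuffles `C` of the words of `a` and `b` lying in the shuffle set `SS(a,b)` with
`bump_{(a,b)}(C) = c`. -/
noncomputable def slideMult {n : ℕ} (a b c : Fin n → ℕ) : ℕ :=
  Multiset.card ((shuffles (wordA a) (wordB b)).filter
    (fun C => DominatesList ((runsWeak C).map
        (fun r => (r.filter (fun z => z % 2 = 1)).length)) a ∧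
      DominatesList ((runsWeak C).map (fun r => (r.filter (fun z => z % 2 = 0)).length)) b ∧
      IsBumpS a b C c))

/-- Membership in the quasi-shuffle set `QSS(a,b)`: a pair `(γ_a, γ_b)` of weak compositions
of a common length at most `n` with `γ_a ≥ a`, `flat(γ_a) = flat(a)`, `γ_b ≥ b`,
`flat(γ_b) = flat(b)` (after padding with trailing zeros), and all entries of
`γ_a + γ_b` positive. -/
def InQSS {n : ℕ} (a b : Fin n → ℕ) (x : (l : ℕ) × (Fin l → ℕ) × (Fin l → ℕ)) : Prop :=
  x.1 ≤ n ∧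
  Dominates (shiftComp 0 n x.2.1) a ∧ flat x.2.1 = flat a ∧
  Dominates (shiftComp 0 n x.2.2) b ∧ flat x.2.2 = flat b ∧
  ∀ k : Fin x.1, 0 < x.2.1 k + x.2.2 k

/-- `c = bump_{(a,b)}(γ_a, γ_b)`: the unique weak composition `c` of length `n` with
`flat(c) = γ_a + γ_b` whose decomposition `c = c_a + c_b` satisfies `c_a ≥ a` and
`c_b ≥ b`, minimal in dominance order among all such compositions. -/
def IsBumpQ {n : ℕ} (a b : Fin n → ℕ) (x : (l : ℕ) × (Fin l → ℕ) × (Fin l → ℕ))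
    (c : Fin n → ℕ) : Prop :=
  ∃ ι : Fin x.1 → Fin n, StrictMono ι ∧
    c = spread ι (fun k => x.2.1 k + x.2.2 k) ∧
    Dominates (spread ι x.2.1) a ∧ Dominates (spread ι x.2.2) b ∧
    ∀ ι' : Fin x.1 → Fin n, StrictMono ι' →
      Dominates (spread ι' x.2.1) a → Dominates (spread ι' x.2.2) b →
      Dominates (spread ι' (fun k => x.2.1 k + x.2.2 k)) c

/-- The multiplicity `[c ∣ a ⧻ b]` of `c` in the quasi-slide product of `a` and `b`: the
number of pairs in the quasi-shuffle set `QSS(a,b)` whose bump is `c`. -/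
noncomputable def qsMult {n : ℕ} (a b c : Fin n → ℕ) : ℕ :=
  Nat.card {x : (l : ℕ) × (Fin l → ℕ) × (Fin l → ℕ) // InQSS a b x ∧ IsBumpQ a b x c}

/-- The Stanley symmetric function `S_w`. -/
noncomputable def StanleySym (w : Equiv.Perm ℕ) : MvPowerSeries ℕ ℤ :=
  ∑ᶠ l ∈ {l : List ℕ | wordPerm l = w ∧ IsReducedWord l}, FqsFun (desStrict l)

section Spread

open Finset

variable {l n : ℕ} {p q : Fin l → Fin n} {g : Fin l → ℕ}

theorem spread_apply_self (hp : Function.Injective p) (g : Fin l → ℕ) (t : Fin l) :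
    spread p g (p t) = g t := by
  simp [spread, hp.eq_iff]

theorem spread_apply_of_notMem_range {i : Fin n} (hi : i ∉ Set.range p) : spread p g i = 0 :=
  sum_eq_zero fun t _ => if_neg fun ht => hi ⟨t, ht⟩

theorem spread_ne_zero_iff (hp : Function.Injective p) (hg : ∀ t, g t ≠ 0) {i : Fin n} :
    spread p g i ≠ 0 ↔ i ∈ Set.range p := by
  refine ⟨fun h => not_not.1 (mt spread_apply_of_notMem_range h), ?_⟩
  rintro ⟨t, rfl⟩
  rw [spread_apply_self hp]
  exact hg t

theorem psum_spread (p : Fin l → Fin n) (g : Fin l → ℕ) (i : ℕ) :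
    psum (spread p g) i = ∑ t with (p t : ℕ) < i, g t := by
  simp only [psum, spread]
  rw [sum_comm, sum_filter]
  refine sum_congr rfl fun t _ => ?_
  rw [sum_ite_eq]
  simp

theorem dominates_spread_iff (hp : StrictMono p) (hq : StrictMono q) (hg : ∀ t, g t ≠ 0) :
    Dominates (spread q g) (spread p g) ↔ ∀ t, q t ≤ p t := by
  refine ⟨fun h t => ?_, fun h i => ?_⟩
  · by_contra! hlt
    have hsub : ({s | (q s : ℕ) < p t + 1} : Finset (Fin l)) ⊆
        ({s | (p s : ℕ) < p t + 1} : Finset (Fin l)) := by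
      intro s hs
      simp only [mem_filter, mem_univ, true_and] at hs ⊢
      have hst : s ≤ t := le_of_not_gt fun hts => by
        have := hq hts
        rw [Fin.lt_def] at this hlt
        omega
      exact Nat.lt_succ_of_le (hp.monotone hst)
    have hstrict := sum_lt_sum_of_subset hsub (i := t)
      (mem_filter.2 ⟨mem_univ _, Nat.lt_succ_self _⟩)
      (fun hs => by
        simp only [mem_filter, mem_univ, true_and] at hs
        rw [Fin.lt_def] at hlt
        omega) (Nat.pos_of_ne_zero (hg t)) fun _ _ _ => Nat.zero_le _
    have hdom := h ⟨p t + 1, by omega⟩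
    simp only [psum_spread] at hdom
    omega
  · simp only [psum_spread]
    refine sum_le_sum_of_subset fun s => ?_
    simp only [mem_filter, mem_univ, true_and]
    exact lt_of_le_of_lt (h s)

theorem filter_finRange_mem_range (hp : StrictMono p) :
    (List.finRange n).filter (fun i => decide (i ∈ Set.range p)) = List.ofFn p := by
  refine List.Perm.eq_of_pairwise' (r := (· < ·)) ?_ ?_ ?_
  · exact (List.pairwise_lt_finRange n).filter _
  · exact List.pairwise_ofFn.2 fun _ _ h => hp h
  · rw [List.perm_ext_iff_of_nodup ((List.nodup_finRange n).filter _)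
      (List.nodup_ofFn.2 hp.injective)]
    simp

theorem flat_spread (hp : StrictMono p) (hg : ∀ t, g t ≠ 0) : flat (spread p g) = List.ofFn g := by
  rw [flat, List.ofFn_eq_map, List.filter_map,
    List.filter_congr (p := (fun x => decide (x ≠ 0)) ∘ spread p g)
      (q := fun i => decide (i ∈ Set.range p))
      fun i _ => decide_eq_decide.2 (spread_ne_zero_iff hp.injective hg),
    filter_finRange_mem_range hp, List.map_ofFn]
  exact congrArg List.ofFn (funext (spread_apply_self hp.injective g))

end Spread

section Positions

open Finset

variable {n : ℕ}

theorem zero_notMem_flat (a : Fin n → ℕ) : 0 ∉ flat a := by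
  simp [flat]

theorem eq_spread_orderEmbOfFin (a : Fin n → ℕ) {m : ℕ} (h : #{i | a i ≠ 0} = m) :
    a = spread (orderEmbOfFin _ h) (a ∘ orderEmbOfFin _ h) := by
  funext i
  by_cases hi : a i = 0
  · rw [hi, spread_apply_of_notMem_range]
    simp [range_orderEmbOfFin, hi]
  · obtain ⟨t, rfl⟩ : i ∈ Set.range (orderEmbOfFin _ h) := by simp [range_orderEmbOfFin, hi]
    rw [spread_apply_self (orderEmbOfFin _ h).injective, Function.comp_apply]

theorem exists_strictMono_eq_spread {a : Fin n → ℕ} {α : List ℕ} (hα : flat a = α) :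
    ∃ p : Fin α.length → Fin n, StrictMono p ∧ a = spread p α.get := by
  subst hα
  have hflat {m : ℕ} (h : #{i | a i ≠ 0} = m) : flat a = List.ofFn (a ∘ orderEmbOfFin _ h) := by
    conv_lhs => rw [eq_spread_orderEmbOfFin a h]
    refine flat_spread (orderEmbOfFin _ h).strictMono fun t => ?_
    exact (mem_filter.1 (orderEmbOfFin_mem _ h t)).2
  have hcard : #{i | a i ≠ 0} = (flat a).length := by rw [hflat rfl, List.length_ofFn]
  refine ⟨orderEmbOfFin _ hcard, (orderEmbOfFin _ hcard).strictMono, ?_⟩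
  have hget : (flat a).get = a ∘ orderEmbOfFin _ hcard :=
    List.ofFn_injective ((List.ofFn_get _).trans (hflat hcard))
  rw [hget]
  exact eq_spread_orderEmbOfFin a hcard

theorem _root_.StrictMono.val_add_le {m k : ℕ} {p : Fin m → Fin n} (hp : StrictMono p)
    (hk : ∀ t, (p t : ℕ) < k) (t : Fin m) : (p t : ℕ) + m ≤ k + t := by
  have hsub : (Ici t).image (fun s => (p s : ℕ)) ⊆ Ico (p t : ℕ) k := by
    intro x hx
    obtain ⟨s, hts, rfl⟩ := mem_image.1 hx
    exact mem_Ico.2 ⟨hp.monotone (mem_Ici.1 hts), hk s⟩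
  have hcard := card_le_card hsub
  rw [card_image_of_injective _ fun _ _ hst => hp.injective (Fin.ext hst), Fin.card_Ici,
    Nat.card_Ico] at hcard
  have := hk t
  omega

theorem quasiFlat_spread_iff {m k : ℕ} {p : Fin m → Fin n} {g : Fin m → ℕ} (hp : StrictMono p)
    (hg : ∀ t, g t ≠ 0) (hk : ∀ t, (p t : ℕ) < k) (hlast : ∃ t, (p t : ℕ) + 1 = k) :
    QuasiFlat (spread p g) ↔ ∀ t, k + t ≤ p t + m := by
  have hmem {i : Fin n} : spread p g i ≠ 0 ↔ i ∈ Set.range p := spread_ne_zero_iff hp.injective hg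
  constructor
  · intro hq t
    obtain ⟨t₀, ht₀⟩ := hlast
    have hsub : Icc (p t) (p t₀) ⊆ (Ici t).image p := by
      intro i hi
      rw [mem_Icc] at hi
      obtain ⟨s, rfl⟩ := hmem.1 (hq _ _ _ hi.1 hi.2 (hmem.2 ⟨t, rfl⟩) (hmem.2 ⟨t₀, rfl⟩))
      exact mem_image_of_mem p (mem_Ici.2 (hp.le_iff_le.1 hi.1))
    have hcard := (card_le_card hsub).trans card_image_le
    rw [Fin.card_Icc, Fin.card_Ici] at hcard
    have := hk t
    omega
  · intro h i j j' hij hjj' hi hj'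
    have hpos (t : Fin m) : (p t : ℕ) + m = k + t := le_antisymm (hp.val_add_le hk t) (h t)
    obtain ⟨s, rfl⟩ := hmem.1 hi
    obtain ⟨u, rfl⟩ := hmem.1 hj'
    rw [Fin.le_def] at hij hjj'
    have := hpos s
    have := hpos u
    have hu := u.isLt
    refine hmem.2 ⟨⟨j + m - k, by omega⟩, Fin.ext ?_⟩
    have := hpos ⟨j + m - k, by omega⟩
    simp only at this
    omega

end Positions

section Coefficients

open Finset MvPolynomial

variable {n : ℕ} {α : List ℕ}

theorem get_ne_zero_of_zero_notMem (hα : 0 ∉ α) (t : Fin α.length) : α.get t ≠ 0 :=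
  fun h => hα (h ▸ α.get_mem t)

theorem coe_placeExp (α : List ℕ) (i : Fin α.length → Fin n) :
    ⇑(placeExp α i) = spread i α.get := by
  ext x
  simp [placeExp, spread, Finsupp.single_apply]

theorem flat_placeExp (hα : 0 ∉ α) {i : Fin α.length → Fin n} (hi : StrictMono i) :
    flat ⇑(placeExp α i) = α := by
  rw [coe_placeExp, flat_spread hi (get_ne_zero_of_zero_notMem hα), List.ofFn_get]

theorem placeExp_inj (hα : 0 ∉ α) {i j : Fin α.length → Fin n} (hi : StrictMono i)
    (hj : StrictMono j) : placeExp α i = placeExp α j ↔ i = j := by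
  refine ⟨fun h => (hi.range_inj hj).1 (Set.ext fun x => ?_), fun h => h ▸ rfl⟩
  have hx := congrArg (fun d : Fin n →₀ ℕ => d x ≠ 0) h
  simp only [coe_placeExp] at hx
  rw [spread_ne_zero_iff hi.injective (get_ne_zero_of_zero_notMem hα),
    spread_ne_zero_iff hj.injective (get_ne_zero_of_zero_notMem hα)] at hx
  exact Iff.of_eq hx

theorem mem_wcFinset_of_flat_eq {a b : Fin n → ℕ} (h : flat b = flat a) :
    b ∈ wcFinset n (∑ i, a i) := by
  rw [wcFinset, Fintype.mem_piFinset]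
  intro i
  rw [mem_range, Nat.lt_succ_iff]
  by_cases hi : b i = 0
  · exact hi ▸ Nat.zero_le _
  have hmem : b i ∈ flat a := h ▸ List.mem_filter.2 ⟨List.mem_ofFn.2 ⟨i, rfl⟩, by simpa⟩
  obtain ⟨j, hj⟩ := List.mem_ofFn.1 (List.mem_filter.1 hmem).1
  exact hj ▸ single_le_sum (fun _ _ => Nat.zero_le _) (mem_univ j)

theorem coeff_slideM (a : Fin n → ℕ) (d : Fin n →₀ ℕ) :
    coeff d (slideM a) = if Dominates ⇑d a ∧ flat ⇑d = flat a then 1 else 0 := by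
  rw [slideM, coeff_sum]
  simp only [coeff_monomial, Equiv.symm_apply_eq]
  rw [sum_ite_eq']
  refine if_congr ?_ rfl rfl
  rw [mem_filter]
  exact ⟨And.right, fun h => ⟨mem_wcFinset_of_flat_eq h.2, h⟩⟩

theorem coeff_placeExp_slideM_spread (hα : 0 ∉ α) {p q : Fin α.length → Fin n}
    (hp : StrictMono p) (hq : StrictMono q) :
    coeff (placeExp α q) (slideM (spread p α.get)) = if ∀ t, q t ≤ p t then 1 else 0 := by
  have hg := get_ne_zero_of_zero_notMem hα
  rw [coeff_slideM, flat_placeExp hα hq, flat_spread hp hg, List.ofFn_get, coe_placeExp]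
  simp only [dominates_spread_iff hp hq hg, and_true]

theorem Mqs_eq_sum_monomial (n k : ℕ) (α : List ℕ) :
    Mqs n k α = ∑ i ∈ univ.filter (fun i : Fin α.length → Fin n =>
      StrictMono i ∧ ∀ t, (i t : ℕ) < k), monomial (placeExp α i) 1 := by
  refine sum_congr rfl fun i _ => ?_
  simp_rw [placeExp, monomial_sum_one, X_pow_eq_monomial]

theorem coeff_placeExp_Mqs (k : ℕ) (hα : 0 ∉ α) {q : Fin α.length → Fin n} (hq : StrictMono q) :
    coeff (placeExp α q) (Mqs n k α) = if ∀ t, (q t : ℕ) < k then 1 else 0 := by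
  rw [Mqs_eq_sum_monomial, coeff_sum]
  simp only [coeff_monomial]
  rw [sum_congr rfl fun i hi => if_congr (placeExp_inj hα (mem_filter.1 hi).2.1 hq) rfl rfl,
    sum_ite_eq']
  simp [hq]

theorem coeff_Mqs_of_flat_ne (k : ℕ) (hα : 0 ∉ α) {d : Fin n →₀ ℕ} (hd : flat ⇑d ≠ α) :
    coeff d (Mqs n k α) = 0 := by
  rw [Mqs_eq_sum_monomial, coeff_sum]
  refine sum_eq_zero fun i hi => ?_
  rw [coeff_monomial, if_neg]
  rintro rfl
  exact hd (flat_placeExp hα (mem_filter.1 hi).2.1)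

theorem isQuasisymmetricIn_Mqs (k : ℕ) (hα : 0 ∉ α) : IsQuasisymmetricIn k (Mqs n k α) := by
  intro β hβ i j hi hj hik hjk
  have hβ0 : 0 ∉ β := fun h => lt_irrefl 0 (hβ 0 h)
  by_cases hβα : β = α
  · subst hβα
    rw [coeff_placeExp_Mqs k hβ0 hi, coeff_placeExp_Mqs k hβ0 hj, if_pos hik, if_pos hjk]
  · rw [coeff_Mqs_of_flat_ne k hα (by rwa [flat_placeExp hβ0 hi]),
      coeff_Mqs_of_flat_ne k hα (by rwa [flat_placeExp hβ0 hj])]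

end Coefficients

section TopJustified

open MvPolynomial

variable {n k : ℕ} {α : List ℕ} {p : Fin α.length → Fin n}

theorem slideM_spread_eq_Mqs (hα : 0 ∉ α) (hp : StrictMono p) (hk : ∀ t, (p t : ℕ) < k)
    (htop : ∀ t, k + t ≤ p t + α.length) : slideM (spread p α.get) = Mqs n k α := by
  ext d
  by_cases hd : flat ⇑d = α
  · obtain ⟨q, hq, hdq⟩ := exists_strictMono_eq_spread hd
    obtain rfl : d = placeExp α q := DFunLike.coe_injective (hdq.trans (coe_placeExp α q).symm)
    rw [coeff_placeExp_slideM_spread hα hp hq, coeff_placeExp_Mqs k hα hq]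
    refine if_congr ⟨fun h t => (Fin.le_def.1 (h t)).trans_lt (hk t), fun h t => ?_⟩ rfl rfl
    have := hq.val_add_le h t
    have := htop t
    exact Fin.le_def.2 (by omega)
  · rw [coeff_slideM, coeff_Mqs_of_flat_ne k hα hd, if_neg fun h =>
      hd (h.2.trans ((flat_spread hp (get_ne_zero_of_zero_notMem hα)).trans (List.ofFn_get α)))]

theorem le_of_isQuasisymmetricIn_slideM (hα : 0 ∉ α) (hp : StrictMono p)
    (hk : ∀ t, (p t : ℕ) < k) (hQ : IsQuasisymmetricIn k (slideM (spread p α.get)))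
    {q : Fin α.length → Fin n} (hq : StrictMono q) (hqk : ∀ t, (q t : ℕ) < k) :
    ∀ t, q t ≤ p t := by
  have h := hQ α (fun x hx => Nat.pos_of_ne_zero fun h => hα (h ▸ hx)) p q hp hq hk hqk
  rw [coeff_placeExp_slideM_spread hα hp hp, coeff_placeExp_slideM_spread hα hp hq,
    if_pos fun _ => le_rfl] at h
  by_contra hqp
  rw [if_neg hqp] at h
  exact one_ne_zero h

end TopJustified

/-- `𝔐_a` is quasisymmetric in `x_1, …, x_k` iff `a` is quasi-flat, where `k`
is the largest index with `a_k ≠ 0`; in that case `𝔐_a = M_{flat(a)}(x_1, …, x_k)`. -/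
theorem monomialSlide_quasisymmetric_iff_quasiFlat {n : ℕ} (a : Fin n → ℕ) (k : ℕ)
    (hk : ∃ i : Fin n, (i : ℕ) + 1 = k ∧ a i ≠ 0 ∧ ∀ j : Fin n, a j ≠ 0 → j ≤ i) :
    (IsQuasisymmetricIn k (slideM a) ↔ QuasiFlat a) ∧
    (QuasiFlat a → slideM a = Mqs n k (flat a)) := by
  obtain ⟨i₀, rfl, hi₀, hmax⟩ := hk
  generalize hα : flat a = α
  obtain ⟨p, hp, rfl⟩ := exists_strictMono_eq_spread hα
  have hα0 : 0 ∉ α := hα ▸ zero_notMem_flat _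
  have hg := get_ne_zero_of_zero_notMem hα0
  have hmem {i : Fin n} := spread_ne_zero_iff (i := i) hp.injective hg
  have hpk (t) : (p t : ℕ) < i₀ + 1 := Nat.lt_succ_of_le (hmax _ (hmem.2 ⟨t, rfl⟩))
  obtain ⟨t₀, rfl⟩ := hmem.1 hi₀
  have hQF := quasiFlat_spread_iff hp hg hpk ⟨t₀, rfl⟩
  have hM (hq) := slideM_spread_eq_Mqs hα0 hp hpk (hQF.1 hq)
  refine ⟨⟨fun hQ => hQF.2 fun t => ?_, fun hq => hM hq ▸ isQuasisymmetricIn_Mqs _ hα0⟩, hM⟩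
  have hm : α.length ≤ p t₀ + 1 := by
    have := hp.val_add_le hpk ⟨0, t₀.pos⟩
    simp only at this
    omega
  -- the top-justified position vector `s ↦ k - ℓ(α) + s`
  let j (s : Fin α.length) : Fin n := ⟨(p t₀ : ℕ) + 1 + s - α.length, by omega⟩
  have hjp := le_of_isQuasisymmetricIn_slideM hα0 hp hpk hQ (q := j)
    (fun s u hsu => Fin.lt_def.2 (by simp only [j]; have := Fin.lt_def.1 hsu; omega))
    (fun s => by simp only [j]; omega) t
  rw [Fin.le_def] at hjp
  simp only [j] at hjp
  omega

end SlidePaper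
end

section
/- For every n ≥ 1 and k ≥ 0, the fundamental slide polynomials {𝔉_a : a a weak composition of length n with a_1+⋯+a_n = k} form a ℤ-basis of the ℤ-module of homogeneous polynomials of degree k in ℤ[x_1,…,x_n]. -/
/-!
Expanding `𝔉_a` in monomials gives `x^a` plus monomials `x^b` with `b` dominating `a`, and
`b ≠ a` forces the sum of all partial sums of `b` to exceed that of `a`. Ordering weak
compositions by this sum makes the transition matrix to the monomial basis unitriangular, hence
of determinant `1`, so the `𝔉_a` form a basis over `ℤ` exactly as the monomials do.
-/

open scoped Classical

theorem Matrix.det_eq_one_of_unitriangular {m α R : Type*} [Fintype m] [DecidableEq m]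
    [LinearOrder α] [CommRing R] {A : Matrix m m R} (f : m → α) (hdiag : ∀ i, A i i = 1)
    (hlt : ∀ i j, i ≠ j → A i j ≠ 0 → f j < f i) : A.det = 1 := by
  have hA : A.BlockTriangular (OrderDual.toDual ∘ f) := fun i j hij => by
    by_contra h
    by_cases hij' : i = j
    · subst hij'; exact lt_irrefl _ hij
    · exact (hlt i j hij' h).not_gt hij
  have hblock (v : αᵒᵈ) : A.toSquareBlock (OrderDual.toDual ∘ f) v = 1 := by
    ext ⟨i, hi⟩ ⟨j, hj⟩
    by_cases hij : i = j
    · subst hij; simp [Matrix.toSquareBlock_def, hdiag]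
    · rw [Matrix.toSquareBlock_def, Matrix.one_apply_ne (by simpa using hij)]
      by_contra h
      have hfij : f i = f j := OrderDual.toDual.injective (hi.trans hj.symm)
      exact (hlt i j hij h).ne' hfij
  simp [hA.det, hblock]

namespace MvPolynomial

variable (σ R : Type*) [Fintype σ] [CommSemiring R]

theorem linearIndependent_monomial_of_sum_eq (k : ℕ) :
    LinearIndependent R fun a : {a : σ → ℕ // ∑ i, a i = k} =>
      (monomial (Finsupp.equivFunOnFinite.symm a.1) 1 : MvPolynomial σ R) := by
  simpa [Function.comp_def] using (basisMonomials σ R).linearIndependent.comp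
    (fun a : {a : σ → ℕ // ∑ i, a i = k} => Finsupp.equivFunOnFinite.symm a.1)
    (Finsupp.equivFunOnFinite.symm.injective.comp Subtype.val_injective)

theorem span_monomial_of_sum_eq (k : ℕ) :
    Submodule.span R (Set.range fun a : {a : σ → ℕ // ∑ i, a i = k} =>
      (monomial (Finsupp.equivFunOnFinite.symm a.1) 1 : MvPolynomial σ R)) =
      homogeneousSubmodule σ R k := by
  rw [homogeneousSubmodule_eq_finsupp_supported, AddMonoidAlgebra.supported_eq_span_single]
  congr 1
  ext p
  simp only [Set.mem_range, Set.mem_image, Set.mem_ofPred_eq, Finsupp.degree_eq_sum,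
    Subtype.exists, exists_prop]
  constructor
  · rintro ⟨a, ha, rfl⟩
    exact ⟨_, by simpa using ha, rfl⟩
  · rintro ⟨d, hd, rfl⟩
    exact ⟨d, hd, by simp [single_eq_monomial]⟩

noncomputable def homogeneousMonomialBasis (k : ℕ) :
    Module.Basis {a : σ → ℕ // ∑ i, a i = k} R (homogeneousSubmodule σ R k) :=
  (Module.Basis.span (linearIndependent_monomial_of_sum_eq σ R k)).map
    (LinearEquiv.ofEq _ _ (span_monomial_of_sum_eq σ R k))

theorem coe_homogeneousMonomialBasis (k : ℕ) (a : {a : σ → ℕ // ∑ i, a i = k}) :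
    (homogeneousMonomialBasis σ R k a : MvPolynomial σ R) =
      monomial (Finsupp.equivFunOnFinite.symm a.1) 1 := by
  rw [homogeneousMonomialBasis, Module.Basis.map_apply, LinearEquiv.coe_ofEq_apply,
    Module.Basis.span_apply]

end MvPolynomial

namespace SlidePaper

section

variable {n : ℕ}

theorem psum_succ (a : Fin n → ℕ) (i : ℕ) (h : i < n) :
    psum a (i + 1) = psum a i + a ⟨i, h⟩ := by
  unfold psum
  rw [show (Finset.univ.filter (fun j : Fin n => (j : ℕ) < i + 1))
      = insert ⟨i, h⟩ (Finset.univ.filter (fun j : Fin n => (j : ℕ) < i)) by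
    ext j; simp [Fin.ext_iff]; omega]
  rw [Finset.sum_insert (by simp)]
  ring

theorem eq_of_psum_eq {a b : Fin n → ℕ} (h : ∀ i ≤ n, psum a i = psum b i) : a = b := by
  funext j
  have hj := h j (by omega)
  have hj' := h (j + 1) (by omega)
  rw [psum_succ a j j.isLt, psum_succ b j j.isLt] at hj'
  simp only [Fin.eta] at hj'
  omega

theorem dominates_refl (a : Fin n → ℕ) : Dominates a a := fun _ => le_rfl

def dominanceRank (a : Fin n → ℕ) : ℕ := ∑ i ∈ Finset.range (n + 1), psum a i

theorem dominanceRank_lt_of_dominates {a b : Fin n → ℕ} (h : Dominates b a) (hne : a ≠ b) :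
    dominanceRank a < dominanceRank b := by
  obtain ⟨i, hi, hlt⟩ : ∃ i ≤ n, psum a i < psum b i := by
    by_contra! H
    exact hne (eq_of_psum_eq fun i hi => le_antisymm (h ⟨i, by omega⟩) (H i hi))
  exact Finset.sum_lt_sum (fun i hi => h ⟨i, Finset.mem_range.mp hi⟩)
    ⟨i, Finset.mem_range.mpr (by omega), hlt⟩

theorem sum_flat (a : Fin n → ℕ) : (flat a).sum = ∑ i, a i := by
  rw [flat, ← List.sum_ofFn]
  generalize List.ofFn a = l
  induction l with
  | nil => simp
  | cons x t ih => by_cases hx : x = 0 <;> simp [hx, ih.symm]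

theorem Refines.refl (α : List ℕ) : Refines α α :=
  ⟨α.map ([·]), by induction α <;> simp_all, by simp [Function.comp_def]⟩

theorem Refines.sum_eq {β α : List ℕ} (h : Refines β α) : β.sum = α.sum := by
  obtain ⟨L, rfl, rfl⟩ := h
  simp [List.sum_flatten]

theorem mem_wcFinset_of_sum_eq {k : ℕ} {a : Fin n → ℕ} (ha : ∑ i, a i = k) :
    a ∈ wcFinset n k := by
  simp only [wcFinset, Fintype.mem_piFinset, Finset.mem_range, Nat.lt_succ_iff]
  exact fun i => ha ▸ Finset.single_le_sum (fun j _ => Nat.zero_le (a j)) (Finset.mem_univ i)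

instance (n k : ℕ) : Fintype {a : Fin n → ℕ // ∑ i, a i = k} :=
  Fintype.subtype (Finset.Nat.antidiagonalTuple n k) fun _ => Finset.Nat.mem_antidiagonalTuple

/-- The entry at `(b, a)` is the coefficient of `x^b` in `𝔉_a`. -/
noncomputable def slideMatrix (n k : ℕ) :
    Matrix {a : Fin n → ℕ // ∑ i, a i = k} {a : Fin n → ℕ // ∑ i, a i = k} ℤ :=
  fun b a => if Dominates b.1 a.1 ∧ Refines (flat b.1) (flat a.1) then 1 else 0

theorem det_slideMatrix (k : ℕ) : (slideMatrix n k).det = 1 := by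
  refine Matrix.det_eq_one_of_unitriangular (fun a => dominanceRank a.1)
    (fun a => if_pos ⟨dominates_refl _, Refines.refl _⟩) fun b a hne h => ?_
  have hdom : Dominates b.1 a.1 := by
    by_contra hd
    exact h (if_neg fun hP => hd hP.1)
  exact dominanceRank_lt_of_dominates hdom fun hab => hne (Subtype.ext hab.symm)

theorem slideF_eq_sum_slideMatrix {k : ℕ} (a : {a : Fin n → ℕ // ∑ i, a i = k}) :
    slideF a.1 = ∑ b, slideMatrix n k b a •
      MvPolynomial.monomial (Finsupp.equivFunOnFinite.symm b.1) 1 := by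
  set P := fun b : Fin n → ℕ => Dominates b a.1 ∧ Refines (flat b) (flat a.1)
  have hsupp : (wcFinset n k).filter P = (Finset.Nat.antidiagonalTuple n k).filter P := by
    ext b
    simp only [Finset.mem_filter, Finset.Nat.mem_antidiagonalTuple, and_congr_left_iff]
    intro hb
    have hsum : ∑ i, b i = k := by rw [← sum_flat, hb.2.sum_eq, sum_flat, a.2]
    exact ⟨fun _ => hsum, mem_wcFinset_of_sum_eq⟩
  rw [slideF, a.2, hsupp, Finset.sum_filter,
    Finset.sum_subtype (F := inferInstance) _ fun _ => Finset.Nat.mem_antidiagonalTuple]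
  simp only [slideMatrix, ite_smul, one_smul, zero_smul]

end

theorem fundamentalSlide_basis_general (n k : ℕ) :
    ∃ B : Module.Basis {a : Fin n → ℕ // ∑ i, a i = k} ℤ
        (MvPolynomial.homogeneousSubmodule (Fin n) ℤ k),
      ∀ a : {a : Fin n → ℕ // ∑ i, a i = k},
        (B a : MvPolynomial (Fin n) ℤ) = slideF a.val := by
  set M := MvPolynomial.homogeneousMonomialBasis (Fin n) ℤ k
  set v := fun a => ∑ b, slideMatrix n k b a • M b
  have hv : M.toMatrix v = slideMatrix n k := by
    ext b a
    rw [Module.Basis.toMatrix_apply, M.repr_sum_self]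
  have hdet : IsUnit (M.det v) := by
    rw [Module.Basis.det_apply, hv, det_slideMatrix]
    exact isUnit_one
  obtain ⟨hli, hspan⟩ := M.is_basis_iff_det.mpr hdet
  refine ⟨Module.Basis.mk hli hspan.ge, fun a => ?_⟩
  simp [v, M, MvPolynomial.coe_homogeneousMonomialBasis, slideF_eq_sum_slideMatrix a]

/-- the fundamental slide polynomials indexed by weak compositions of length
`n` and size `k` form a `ℤ`-basis of the homogeneous polynomials of degree `k`. -/
theorem fundamentalSlide_basis (n k : ℕ) (hn : 1 ≤ n) :
    ∃ B : Module.Basis {a : Fin n → ℕ // ∑ i, a i = k} ℤ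
        (MvPolynomial.homogeneousSubmodule (Fin n) ℤ k),
      ∀ a : {a : Fin n → ℕ // ∑ i, a i = k},
        (B a : MvPolynomial (Fin n) ℤ) = slideF a.val :=
  fundamentalSlide_basis_general n k

end SlidePaper
end
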